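/- arXiv:1203.4881 — 2 statements merged into one kernel-verified Lean document; each statement's English description precedes it below -/
import Mathlib

section
/- Fix weights w_1 ≥ w_2 ≥ ... ≥ w_n > 0. The Pareto front of the bi-objective problem (WORDER, C), where WORDER is to be maximized and the complexity C minimized, has exactly n+1 elements: the objective vectors (∑_{k=1}^{j} w_k, 2j-1) for j = 1,...,n together with (0, 0). -/
/-!
A solution whose set of expressed variables is `S` has at least `#S` leaves, hence complexity
at least `2 #S - 1`, and since the weights are sorted its WORDER value is at most the sum of the
`#S` largest weights; the solution `x_1 J ⋯ J x_j` attains both bounds. So the vectors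
`(∑_{k ≤ j} w_k, 2j - 1)` dominate every achievable vector, and since both coordinates strictly
increase with `j` they form an antichain: they are exactly the Pareto-optimal vectors.
-/

open Finset

/-- A GP syntax tree over `n` variables: the only function symbol is the binary join
`J`; leaves are labelled by literals `(i, b)` where `b = true` stands for `x_i` and
`b = false` for the complement `x̄_i`. -/
inductive GPTree (n : ℕ) : Type
  | leaf (v : Fin n × Bool) : GPTree n
  | node (l r : GPTree n) : GPTree n

namespace GPTree

variable {n : ℕ}

/-- The inorder list of leaf labels. -/
def leafList : GPTree n → List (Fin n × Bool)
  | leaf v => [v]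
  | node l r => l.leafList ++ r.leafList

/-- Total number of nodes. -/
def size : GPTree n → ℕ
  | leaf _ => 1
  | node l r => l.size + r.size + 1

/-- Number of leaves. -/
def numLeaves (t : GPTree n) : ℕ := t.leafList.length

end GPTree

/-- A solution is either the empty tree (`none`) or a nonempty syntax tree. -/
abbrev GPSol (n : ℕ) := Option (GPTree n)

namespace GPSol

variable {n : ℕ}

/-- The complexity `C`: the number of nodes (the empty tree has complexity 0). -/
def complexity : GPSol n → ℕ
  | none => 0
  | some t => t.size

/-- The inorder leaf list. -/
def leaves : GPSol n → List (Fin n × Bool)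
  | none => []
  | some t => t.leafList

/-- Number of leaves. -/
def numLeaves (X : GPSol n) : ℕ := X.leaves.length

/-- The set `S` of expressed variables for (W)ORDER: `x_i ∈ S` iff the first
occurrence of a literal of variable `i` in the inorder leaf list is positive. -/
def orderSet (X : GPSol n) : Finset (Fin n) :=
  Finset.univ.filter fun i => X.leaves.find? (fun p => p.1 == i) = some (i, true)

/-- `WORDER(X) = ∑_{x_i ∈ S} w_i`. -/
def worder (w : Fin n → ℝ) (X : GPSol n) : ℝ := ∑ i ∈ orderSet X, w i

/-- `ORDER(X)`: the number of expressed variables (all weights equal to 1). -/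
def order (X : GPSol n) : ℕ := (orderSet X).card

/-- The set `S` of expressed variables for (W)MAJORITY: `x_i ∈ S` iff `x_i` occurs in
the leaf list and at least as often as `x̄_i`. -/
def majoritySet (X : GPSol n) : Finset (Fin n) :=
  Finset.univ.filter fun i =>
    1 ≤ X.leaves.count (i, true) ∧ X.leaves.count (i, false) ≤ X.leaves.count (i, true)

/-- `WMAJORITY(X) = ∑_{x_i ∈ S} w_i`. -/
def wmajority (w : Fin n → ℝ) (X : GPSol n) : ℝ := ∑ i ∈ majoritySet X, w i

end GPSol

/-- The set of achievable objective vectors `(WORDER(X), C(X))`. -/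
def achievable {n : ℕ} (w : Fin n → ℝ) : Set (ℝ × ℕ) :=
  {v | ∃ X : GPSol n, v = (GPSol.worder w X, GPSol.complexity X)}

/-- The Pareto front of the bi-objective problem `(WORDER, C)` (`WORDER` maximized,
`C` minimized): the achievable vectors not strictly dominated by any achievable
vector. -/
def paretoFront {n : ℕ} (w : Fin n → ℝ) : Set (ℝ × ℕ) :=
  {v ∈ achievable w |
    ¬ ∃ u ∈ achievable w, (v.1 ≤ u.1 ∧ u.2 ≤ v.2) ∧ (v.1 < u.1 ∨ u.2 < v.2)}

def prefixSet (n j : ℕ) : Finset (Fin n) := univ.filter fun k => (k : ℕ) < j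

section PrefixSet

variable {n : ℕ}

lemma Fin.val_le_of_strictMono {k : ℕ} {e : Fin k → Fin n} (he : StrictMono e) (i : Fin k) :
    (i : ℕ) ≤ e i := by
  obtain ⟨i, hi⟩ := i
  induction i with
  | zero => exact Nat.zero_le _
  | succ m ih =>
    exact (ih (by omega)).trans_lt (he (show (⟨m, by omega⟩ : Fin k) < ⟨m + 1, hi⟩ from
      Nat.lt_succ_self m))

lemma prefixSet_eq_map_castLE {j : ℕ} (hj : j ≤ n) :
    prefixSet n j = univ.map (Fin.castLEEmb hj) := by
  ext k
  simp only [prefixSet, mem_filter, mem_univ, true_and, mem_map, Fin.castLEEmb_apply]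
  exact ⟨fun hk => ⟨⟨k, hk⟩, rfl⟩, by rintro ⟨i, rfl⟩; exact i.isLt⟩

lemma card_prefixSet {j : ℕ} (hj : j ≤ n) : #(prefixSet n j) = j := by
  simp [prefixSet_eq_map_castLE hj]

theorem sum_le_sum_prefixSet_card {β : Type*} [AddCommMonoid β] [PartialOrder β]
    [IsOrderedAddMonoid β] {w : Fin n → β} (hw : Antitone w) (S : Finset (Fin n)) :
    ∑ i ∈ S, w i ≤ ∑ i ∈ prefixSet n #S, w i := by
  have hS : #S ≤ n := by simpa using card_le_univ S
  set e := S.orderEmbOfFin rfl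
  calc ∑ i ∈ S, w i = ∑ i : Fin #S, w (e i) := by
        conv_lhs => rw [← S.map_orderEmbOfFin_univ rfl]
        exact sum_map _ _ _
    _ ≤ ∑ i : Fin #S, w (Fin.castLE hS i) :=
        sum_le_sum fun i _ => hw (Fin.val_le_of_strictMono e.strictMono i)
    _ = ∑ i ∈ prefixSet n #S, w i := by
        rw [prefixSet_eq_map_castLE hS, sum_map]; rfl

lemma sum_prefixSet_lt_sum_prefixSet {w : Fin n → ℝ} (hw : ∀ i, 0 < w i) {i j : ℕ}
    (hij : i < j) (hj : j ≤ n) : ∑ k ∈ prefixSet n i, w k < ∑ k ∈ prefixSet n j, w k := by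
  refine sum_lt_sum_of_subset (i := ⟨i, by omega⟩) ?_ ?_ ?_ (hw _) fun k _ _ => (hw k).le
  · intro k; simp only [prefixSet, mem_filter, mem_univ, true_and]; omega
  · simpa [prefixSet] using hij
  · simp [prefixSet]

end PrefixSet

namespace GPTree

variable {n : ℕ}

lemma size_add_one (t : GPTree n) : t.size + 1 = 2 * t.numLeaves := by
  induction t with
  | leaf v => rfl
  | node l r ihl ihr =>
    simp only [numLeaves, size, leafList, List.length_append] at *
    omega

end GPTree

namespace GPSol

variable {n : ℕ}

/-- For the empty solution the truncated subtraction gives `2 * 0 - 1 = 0`. -/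
lemma complexity_eq (X : GPSol n) : X.complexity = 2 * X.numLeaves - 1 := by
  cases X with
  | none => rfl
  | some t =>
    have := t.size_add_one
    simp only [complexity, numLeaves, leaves, GPTree.numLeaves] at *
    omega

lemma exists_leaves_eq : ∀ L : List (Fin n × Bool), ∃ X : GPSol n, X.leaves = L
  | [] => ⟨none, rfl⟩
  | a :: L => by
    obtain ⟨_ | t, hX⟩ := exists_leaves_eq L
    · exact ⟨some (.leaf a), by simp_all [leaves, GPTree.leafList]⟩
    · exact ⟨some (.node (.leaf a) t), by simp_all [leaves, GPTree.leafList]⟩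

lemma card_orderSet_le_numLeaves (X : GPSol n) : #X.orderSet ≤ X.numLeaves := by
  classical
  calc #X.orderSet = #(X.orderSet.image fun i => (i, true)) :=
        (card_image_of_injective _ fun a b h => by simpa using h).symm
    _ ≤ #X.leaves.toFinset := card_le_card fun p hp => by
        obtain ⟨i, hi, rfl⟩ := mem_image.mp hp
        simp only [orderSet, mem_filter, mem_univ, true_and] at hi
        exact List.mem_toFinset.mpr (List.mem_of_find?_eq_some hi)
    _ ≤ X.numLeaves := List.toFinset_card_le _

lemma mem_orderSet_iff_of_forall_pos {X : GPSol n} (hX : ∀ p ∈ X.leaves, p.2 = true)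
    (i : Fin n) : i ∈ X.orderSet ↔ (i, true) ∈ X.leaves := by
  simp only [orderSet, mem_filter, mem_univ, true_and]
  refine ⟨List.mem_of_find?_eq_some, fun hi => ?_⟩
  obtain ⟨q, hq⟩ : ∃ q, X.leaves.find? (fun p => p.1 == i) = some q :=
    Option.isSome_iff_exists.mp (List.find?_isSome.mpr ⟨(i, true), hi, beq_self_eq_true i⟩)
  have hq1 : q.1 = i := by simpa using List.find?_some hq
  rw [hq, ← hq1, ← hX q (List.mem_of_find?_eq_some hq)]

lemma exists_orderSet_eq (S : Finset (Fin n)) :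
    ∃ X : GPSol n, X.orderSet = S ∧ X.numLeaves = #S := by
  obtain ⟨X, hX⟩ := exists_leaves_eq (S.toList.map fun i => (i, true))
  refine ⟨X, ?_, by simp [numLeaves, hX]⟩
  ext i
  rw [mem_orderSet_iff_of_forall_pos (by simp_all) i, hX]
  simp

end GPSol

lemma setOf_maximal_eq_of_isAntichain {α : Type*} [PartialOrder α] {A B : Set α} (hBA : B ⊆ A)
    (hAB : ∀ a ∈ A, ∃ b ∈ B, a ≤ b) (hB : IsAntichain (· ≤ ·) B) :
    {x | Maximal (· ∈ A) x} = B := by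
  ext x
  refine ⟨fun hx => ?_, fun hx => ⟨hBA hx, fun a ha hxa => ?_⟩⟩
  · obtain ⟨b, hb, hxb⟩ := hAB x hx.prop
    rwa [hx.eq_of_le (hBA hb) hxb]
  · obtain ⟨b, hb, hab⟩ := hAB a ha
    rwa [← hB.eq hx hb (hxa.trans hab)] at hab

/-- Pareto dominance for `(maximize, minimize)` is the product order on `ℝ × ℕᵒᵈ`. -/
lemma paretoFront_eq_setOf_maximal {n : ℕ} (w : Fin n → ℝ) :
    paretoFront w = {v | Maximal (α := ℝ × ℕᵒᵈ) (· ∈ achievable w) v} := by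
  ext v
  simp only [paretoFront, Set.mem_ofPred_eq, Maximal, Prod.le_def]
  refine and_congr_right fun _ => ?_
  simp only [not_exists, not_and, not_or, not_lt]
  exact Iff.rfl

section Objectives

variable {n : ℕ} (w : Fin n → ℝ)

lemma sum_prefixSet_mem_achievable {j : ℕ} (hj : j ≤ n) :
    ((∑ k ∈ prefixSet n j, w k, 2 * j - 1) : ℝ × ℕ) ∈ achievable w := by
  obtain ⟨X, hS, hX⟩ := GPSol.exists_orderSet_eq (prefixSet n j)
  refine ⟨X, ?_⟩
  rw [GPSol.worder, GPSol.complexity_eq, hS, hX, card_prefixSet hj]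

lemma GPSol.two_mul_card_orderSet_sub_one_le_complexity (X : GPSol n) :
    2 * #X.orderSet - 1 ≤ X.complexity := by
  have := X.card_orderSet_le_numLeaves
  rw [X.complexity_eq]
  omega

variable {w}

lemma GPSol.worder_le_sum_prefixSet (hw : Antitone w) (X : GPSol n) :
    X.worder w ≤ ∑ k ∈ prefixSet n #X.orderSet, w k :=
  sum_le_sum_prefixSet_card hw X.orderSet

lemma eq_of_sum_prefixSet_le_of_le {i j : ℕ} (hw : ∀ k, 0 < w k) (hi : i ≤ n)
    (hsum : ∑ k ∈ prefixSet n i, w k ≤ ∑ k ∈ prefixSet n j, w k)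
    (hcompl : 2 * j - 1 ≤ 2 * i - 1) : i = j := by
  by_contra hne
  rcases Nat.lt_or_gt_of_ne hne with hij | hji
  · omega
  · exact (sum_prefixSet_lt_sum_prefixSet hw hji hi).not_ge hsum

end Objectives

/-- for weights `w_1 ≥ w_2 ≥ ... ≥ w_n > 0`, the Pareto front of
`(WORDER, C)` consists exactly of the `n+1` objective vectors
`(∑_{k=1}^{j} w_k, 2j - 1)` for `j = 1, ..., n` together with `(0, 0)`
(which is the vector for `j = 0`, since `2·0 - 1 = 0` as a truncated natural
number subtraction), and it has exactly `n + 1` elements. -/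
theorem stmt6 {n : ℕ} (w : Fin n → ℝ)
    (hsort : ∀ i j : Fin n, i ≤ j → w j ≤ w i) (hpos : ∀ i, 0 < w i) :
    paretoFront w =
      Set.range (fun j : Fin (n + 1) =>
        ((∑ k ∈ Finset.univ.filter (fun k : Fin n => (k : ℕ) < (j : ℕ)), w k,
          2 * (j : ℕ) - 1) : ℝ × ℕ)) ∧
    (paretoFront w).ncard = n + 1 := by
  set Φ : Fin (n + 1) → ℝ × ℕ := fun j => (∑ k ∈ prefixSet n j, w k, 2 * (j : ℕ) - 1)
  have hΦ : Function.Injective Φ := fun i j h => Fin.ext <| by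
    have := congrArg Prod.snd h
    simp only [Φ] at this
    omega
  have hfront : paretoFront w = Set.range Φ := by
    rw [paretoFront_eq_setOf_maximal]
    refine setOf_maximal_eq_of_isAntichain (α := ℝ × ℕᵒᵈ) ?_ ?_ ?_
    · rintro _ ⟨j, rfl⟩
      exact sum_prefixSet_mem_achievable w (Nat.lt_succ_iff.mp j.isLt)
    · rintro _ ⟨X, rfl⟩
      have hcard : #X.orderSet < n + 1 :=
        Nat.lt_succ_of_le (by simpa using card_le_univ X.orderSet)
      exact ⟨Φ ⟨_, hcard⟩, ⟨_, rfl⟩, X.worder_le_sum_prefixSet hsort,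
        X.two_mul_card_orderSet_sub_one_le_complexity⟩
    · rintro _ ⟨i, rfl⟩ _ ⟨j, rfl⟩ hne ⟨hsum, hcompl⟩
      exact hne (congrArg Φ (Fin.ext (eq_of_sum_prefixSet_le_of_le hpos
        (Nat.lt_succ_iff.mp i.isLt) hsum hcompl)))
  refine ⟨hfront, ?_⟩
  rw [hfront, Set.ncard_range_of_injective hΦ, Nat.card_eq_fintype_card, Fintype.card_fin]
end

section
/- Consider a Markov process on states (s, k) with s ≥ k ≥ 0, where s is the number of leaves of the current tree and k the number of expressed variables, evolving under single HVL-Prime mutations with the MO-WORDER acceptance rule (accept iff fitness strictly increases, or fitness equal and complexity does not increase). Then the quantity s - k never increases: every accepted step either leaves s - k unchanged or decreases it. -/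
open Finset

/-- `Substitute t t'`: `t'` is obtained from `t` by replacing one leaf label. -/
inductive Substitute {n : ℕ} : GPTree n → GPTree n → Prop
  | leaf (a b : Fin n × Bool) : Substitute (.leaf a) (.leaf b)
  | left {l l' r : GPTree n} : Substitute l l' → Substitute (.node l r) (.node l' r)
  | right {l r r' : GPTree n} : Substitute r r' → Substitute (.node l r) (.node l r')

/-- `InsertLeaf t t'`: `t'` is obtained from `t` by replacing some subtree `v` by a join
node whose children are `v` and a new leaf (in either order). -/
inductive InsertLeaf {n : ℕ} : GPTree n → GPTree n → Prop
  | hereL (t : GPTree n) (a : Fin n × Bool) : InsertLeaf t (.node (.leaf a) t)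
  | hereR (t : GPTree n) (a : Fin n × Bool) : InsertLeaf t (.node t (.leaf a))
  | left {l l' r : GPTree n} : InsertLeaf l l' → InsertLeaf (.node l r) (.node l' r)
  | right {l r r' : GPTree n} : InsertLeaf r r' → InsertLeaf (.node l r) (.node l r')

/-- One application of the HVL-Prime operator on solutions (substitute, insert or
delete; deletion is the inverse of insertion, and the empty tree is handled as the
special case). -/
inductive HVLStep {n : ℕ} : GPSol n → GPSol n → Prop
  | sub {X Y : GPTree n} : Substitute X Y → HVLStep (some X) (some Y)
  | ins {X Y : GPTree n} : InsertLeaf X Y → HVLStep (some X) (some Y)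
  | insEmpty (a : Fin n × Bool) : HVLStep none (some (.leaf a))
  | del {X Y : GPTree n} : InsertLeaf Y X → HVLStep (some X) (some Y)
  | delToEmpty (a : Fin n × Bool) : HVLStep (some (.leaf a)) none

/-! On the inorder leaf list a step substitutes, inserts or deletes one literal, and only the
variables of the literals involved can enter or leave the expressed set. A deletion therefore
loses at most one expressed variable. An insertion raises the complexity, so it is accepted only
if the fitness strictly rises, which forces the inserted variable to become expressed. A
substitution touches at most two variables, and with positive weights a fitness that does not
drop cannot come with fewer expressed variables. -/

namespace Finset

variable {α M : Type*} {A B V : Finset α}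

theorem ssubset_of_card_lt_of_card_le_two {S T : Finset α} (hS : S ⊆ V) (hT : T ⊆ V)
    (hV : #V ≤ 2) (h : #T < #S) : T ⊂ S := by
  rcases T.eq_empty_or_nonempty with rfl | hT₀
  · exact empty_ssubset.2 (card_pos.1 (by omega))
  · have hSV : S = V := eq_of_subset_of_card_le hS (by have := hT₀.card_pos; omega)
    exact ssubset_of_subset_of_ne (hSV ▸ hT) (by rintro rfl; omega)

variable [DecidableEq α] [AddCommMonoid M] [PartialOrder M] [IsOrderedCancelAddMonoid M]
  {f : α → M}

/-- Sets that differ on at most two points are ordered by weight as by size: otherwise the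
lighter one would meet those points in a proper subset. -/
theorem card_le_card_of_sum_le (hV : #V ≤ 2) (hAB : ∀ m ∉ V, m ∈ A ↔ m ∈ B)
    (hf : ∀ i ∈ V, 0 < f i) (h : ∑ i ∈ A, f i ≤ ∑ i ∈ B, f i) : #A ≤ #B := by
  by_contra! hlt
  have hsdiff : A \ V = B \ V := by
    ext m
    simp only [mem_sdiff]
    exact ⟨fun ⟨hA, hm⟩ => ⟨(hAB m hm).1 hA, hm⟩, fun ⟨hB, hm⟩ => ⟨(hAB m hm).2 hB, hm⟩⟩
  have hcard : #(B ∩ V) < #(A ∩ V) := by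
    have hA := card_sdiff_add_card_inter A V
    have hB := card_sdiff_add_card_inter B V
    rw [hsdiff] at hA
    omega
  have hss := ssubset_of_card_lt_of_card_le_two inter_subset_right inter_subset_right hV hcard
  obtain ⟨x, hxA, hxB⟩ := exists_of_ssubset hss
  have hsum : ∑ i ∈ B ∩ V, f i < ∑ i ∈ A ∩ V, f i :=
    sum_lt_sum_of_subset hss.subset hxA hxB (hf x (mem_inter.1 hxA).2)
      fun j hj _ => (hf j (mem_inter.1 hj).2).le
  rw [← sum_inter_add_sum_sdiff A V, ← sum_inter_add_sum_sdiff B V, hsdiff] at h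
  exact (add_lt_add_left hsum _).not_ge h

theorem card_lt_card_of_sum_lt {i : α} (hAB : ∀ m ≠ i, m ∈ A ↔ m ∈ B) (hf : ∀ j, 0 ≤ f j)
    (h : ∑ j ∈ A, f j < ∑ j ∈ B, f j) : #A < #B := by
  have hiB : i ∈ B := by
    by_contra hiB
    have hBA : B ⊆ A := fun m hm => (hAB m (ne_of_mem_of_not_mem hm hiB)).2 hm
    exact (sum_le_sum_of_subset_of_nonneg hBA fun j _ _ => hf j).not_gt h
  have hiA : i ∉ A := by
    intro hiA
    have hAB' : A = B := ext fun m => by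
      by_cases hm : m = i
      · subst hm; exact iff_of_true hiA hiB
      · exact hAB m hm
    exact h.ne (hAB' ▸ rfl)
  have hA : A ⊆ B.erase i := fun m hm =>
    have hmi : m ≠ i := ne_of_mem_of_not_mem hm hiA
    mem_erase.2 ⟨hmi, (hAB m hmi).1 hm⟩
  exact (card_le_card hA).trans_lt (card_erase_lt_of_mem hiB)

theorem card_le_card_add_one_of_forall_ne {i : α} (hAB : ∀ m ≠ i, m ∈ A → m ∈ B) :
    #A ≤ #B + 1 :=
  (card_le_card fun m hm => if h : m = i then h ▸ mem_insert_self m B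
    else mem_insert_of_mem (hAB m h hm)).trans (card_insert_le i B)

end Finset

theorem List.find?_append_cons_of_not {α : Type*} {p : α → Bool} {a : α} (L₁ L₂ : List α)
    (ha : p a = false) : (L₁ ++ a :: L₂).find? p = (L₁ ++ L₂).find? p := by
  simp [List.find?_append, ha]

variable {n : ℕ}

namespace Substitute

theorem exists_leafList {t t' : GPTree n} (h : Substitute t t') :
    ∃ L₁ L₂ a b, t.leafList = L₁ ++ a :: L₂ ∧ t'.leafList = L₁ ++ b :: L₂ := by
  induction h with
  | leaf a b => exact ⟨[], [], a, b, rfl, rfl⟩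
  | @left l l' r _ ih =>
    obtain ⟨L₁, L₂, a, b, h, h'⟩ := ih
    exact ⟨L₁, L₂ ++ r.leafList, a, b, by simp [GPTree.leafList, h],
      by simp [GPTree.leafList, h']⟩
  | @right l r r' _ ih =>
    obtain ⟨L₁, L₂, a, b, h, h'⟩ := ih
    exact ⟨l.leafList ++ L₁, L₂, a, b, by simp [GPTree.leafList, h],
      by simp [GPTree.leafList, h']⟩

end Substitute

namespace InsertLeaf

theorem exists_leafList {t t' : GPTree n} (h : InsertLeaf t t') :
    ∃ L₁ L₂ a, t.leafList = L₁ ++ L₂ ∧ t'.leafList = L₁ ++ a :: L₂ := by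
  induction h with
  | hereL t a => exact ⟨[], t.leafList, a, rfl, rfl⟩
  | hereR t a => exact ⟨t.leafList, [], a, by simp, by simp [GPTree.leafList]⟩
  | @left l l' r _ ih =>
    obtain ⟨L₁, L₂, a, h, h'⟩ := ih
    exact ⟨L₁, L₂ ++ r.leafList, a, by simp [GPTree.leafList, h],
      by simp [GPTree.leafList, h']⟩
  | @right l r r' _ ih =>
    obtain ⟨L₁, L₂, a, h, h'⟩ := ih
    exact ⟨l.leafList ++ L₁, L₂, a, by simp [GPTree.leafList, h],
      by simp [GPTree.leafList, h']⟩

theorem size_eq {t t' : GPTree n} (h : InsertLeaf t t') : t'.size = t.size + 2 := by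
  induction h <;> simp only [GPTree.size] at * <;> omega

end InsertLeaf

theorem HVLStep.leaves_cases {X Y : GPSol n} (h : HVLStep X Y) :
    (∃ L₁ L₂ a b, X.leaves = L₁ ++ a :: L₂ ∧ Y.leaves = L₁ ++ b :: L₂) ∨
    (∃ L₁ L₂ a, X.leaves = L₁ ++ L₂ ∧ Y.leaves = L₁ ++ a :: L₂ ∧
      X.complexity < Y.complexity) ∨
    (∃ L₁ L₂ a, X.leaves = L₁ ++ a :: L₂ ∧ Y.leaves = L₁ ++ L₂) := by
  cases h with
  | sub h =>
    obtain ⟨L₁, L₂, a, b, hX, hY⟩ := h.exists_leafList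
    exact .inl ⟨L₁, L₂, a, b, hX, hY⟩
  | ins h =>
    obtain ⟨L₁, L₂, a, hX, hY⟩ := h.exists_leafList
    exact .inr (.inl ⟨L₁, L₂, a, hX, hY, by simp [GPSol.complexity, h.size_eq]⟩)
  | insEmpty a =>
    exact .inr (.inl ⟨[], [], a, rfl, rfl, by simp [GPSol.complexity, GPTree.size]⟩)
  | del h =>
    obtain ⟨L₁, L₂, a, hY, hX⟩ := h.exists_leafList
    exact .inr (.inr ⟨L₁, L₂, a, hX, hY⟩)
  | delToEmpty a => exact .inr (.inr ⟨[], [], a, rfl, rfl⟩)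

namespace GPSol

variable {X Y : GPSol n} {L₁ L₂ : List (Fin n × Bool)} {a : Fin n × Bool} {m : Fin n}

theorem mem_orderSet : m ∈ X.orderSet ↔ X.leaves.find? (·.1 == m) = some (m, true) := by
  simp [orderSet]

theorem find?_fst_append_cons_of_ne (hm : m ≠ a.1) :
    (L₁ ++ a :: L₂).find? (·.1 == m) = (L₁ ++ L₂).find? (·.1 == m) :=
  List.find?_append_cons_of_not L₁ L₂ (by simpa using hm.symm)

theorem mem_orderSet_iff_of_insert (hX : X.leaves = L₁ ++ L₂) (hY : Y.leaves = L₁ ++ a :: L₂)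
    (hm : m ≠ a.1) : m ∈ X.orderSet ↔ m ∈ Y.orderSet := by
  rw [mem_orderSet, mem_orderSet, hX, hY, find?_fst_append_cons_of_ne hm]

theorem order_le_order_of_substitute {w : Fin n → ℝ} (hpos : ∀ i, 0 < w i) {b : Fin n × Bool}
    (hX : X.leaves = L₁ ++ a :: L₂) (hY : Y.leaves = L₁ ++ b :: L₂)
    (hw : X.worder w ≤ Y.worder w) : X.order ≤ Y.order := by
  refine Finset.card_le_card_of_sum_le (V := {a.1, b.1}) Finset.card_le_two ?_
    (fun i _ => hpos i) hw
  intro m hm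
  simp only [Finset.mem_insert, Finset.mem_singleton, not_or] at hm
  rw [mem_orderSet, mem_orderSet, hX, hY, find?_fst_append_cons_of_ne hm.1,
    find?_fst_append_cons_of_ne hm.2]

theorem order_lt_order_of_insert {w : Fin n → ℝ} (hw₀ : ∀ i, 0 ≤ w i)
    (hX : X.leaves = L₁ ++ L₂) (hY : Y.leaves = L₁ ++ a :: L₂)
    (hw : X.worder w < Y.worder w) : X.order < Y.order :=
  Finset.card_lt_card_of_sum_lt (fun _ hm => mem_orderSet_iff_of_insert hX hY hm) hw₀ hw

theorem order_le_order_add_one_of_delete (hX : X.leaves = L₁ ++ a :: L₂)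
    (hY : Y.leaves = L₁ ++ L₂) : X.order ≤ Y.order + 1 :=
  Finset.card_le_card_add_one_of_forall_ne fun _ hm => (mem_orderSet_iff_of_insert hY hX hm).2

end GPSol

/-- under single HVL-Prime mutations with the MO-WORDER acceptance rule
(accept iff the fitness strictly increases, or the fitness is equal and the
complexity does not increase), the difference `s - k` between the number of leaves
`s` and the number of expressed variables `k` never increases: every accepted step
leaves `s - k` unchanged or decreases it. -/
theorem stmt9 {n : ℕ} (w : Fin n → ℝ) (hpos : ∀ i, 0 < w i)
    (X Y : GPSol n) (hstep : HVLStep X Y)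
    (hacc : GPSol.worder w X < GPSol.worder w Y ∨
      (GPSol.worder w Y = GPSol.worder w X ∧
        GPSol.complexity Y ≤ GPSol.complexity X)) :
    (GPSol.numLeaves Y : ℤ) - GPSol.order Y
      ≤ (GPSol.numLeaves X : ℤ) - GPSol.order X := by
  rcases hstep.leaves_cases with ⟨L₁, L₂, a, b, hX, hY⟩ | ⟨L₁, L₂, a, hX, hY, hC⟩ |
    ⟨L₁, L₂, a, hX, hY⟩
  · have hw : X.worder w ≤ Y.worder w := hacc.elim le_of_lt fun h => h.1.ge
    have := GPSol.order_le_order_of_substitute hpos hX hY hw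
    simp only [GPSol.numLeaves, hX, hY, List.length_append, List.length_cons]
    omega
  · have hw : X.worder w < Y.worder w := hacc.resolve_right fun h => by omega
    have := GPSol.order_lt_order_of_insert (fun i => (hpos i).le) hX hY hw
    simp only [GPSol.numLeaves, hX, hY, List.length_append, List.length_cons]
    omega
  · have := GPSol.order_le_order_add_one_of_delete hX hY
    simp only [GPSol.numLeaves, hX, hY, List.length_append, List.length_cons]
    omega
end
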